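/- Correctness of normalization for SLC: for every term Γ ⊢ t : A of SLC there exists a normal form n with Γ ⊢nf n : A such that Γ ⊢ t ≡ n : A in the equational theory of SLC (viewing the normal form as a term via the evident embedding). -/

import Mathlib

/-- Types of SLC: base, unit, products, functions and the modal type ◇. -/
inductive Ty : Type
  | base : Ty
  | unit : Ty
  | prod : Ty → Ty → Ty
  | arr : Ty → Ty → Ty
  | dia : Ty → Ty

/-- Typing contexts (de Bruijn; the head is the most recently bound variable). -/
abbrev Ctx := List Ty

/-- Raw terms of SLC with de Bruijn indices. -/
inductive Tm : Type
  | var : ℕ → Tm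
  | unit : Tm
  | pair : Tm → Tm → Tm
  | fst : Tm → Tm
  | snd : Tm → Tm
  | lam : Tm → Tm
  | app : Tm → Tm → Tm
  | lett : Tm → Tm → Tm           -- let x = t in u (letmap)

/-- Lifting of a renaming under a binder. -/
def liftRen (ρ : ℕ → ℕ) : ℕ → ℕ
  | 0 => 0
  | n + 1 => ρ n + 1

/-- Renaming of the variables of a term. -/
def rename (ρ : ℕ → ℕ) : Tm → Tm
  | .var n => .var (ρ n)
  | .unit => .unit
  | .pair t u => .pair (rename ρ t) (rename ρ u)
  | .fst t => .fst (rename ρ t)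
  | .snd t => .snd (rename ρ t)
  | .lam t => .lam (rename (liftRen ρ) t)
  | .app t u => .app (rename ρ t) (rename ρ u)
  | .lett t u => .lett (rename ρ t) (rename (liftRen ρ) u)

/-- Capture-avoiding substitution of `u` for the variable `k`. -/
def subst (k : ℕ) (u : Tm) : Tm → Tm
  | .var n => if n < k then .var n else if n = k then rename (· + k) u else .var (n - 1)
  | .unit => .unit
  | .pair t t' => .pair (subst k u t) (subst k u t')
  | .fst t => .fst (subst k u t)
  | .snd t => .snd (subst k u t)
  | .lam t => .lam (subst (k + 1) u t)
  | .app t t' => .app (subst k u t) (subst k u t')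
  | .lett t t' => .lett (subst k u t) (subst (k + 1) u t')

/-- The typing judgment `Γ ⊢ t : A` of SLC, with the letmap rule. -/
inductive HasTy : Ctx → Tm → Ty → Prop
  | var {Γ n A} : Γ[n]? = some A → HasTy Γ (.var n) A
  | unit {Γ} : HasTy Γ .unit .unit
  | pair {Γ t u A B} : HasTy Γ t A → HasTy Γ u B → HasTy Γ (.pair t u) (.prod A B)
  | fst {Γ t A B} : HasTy Γ t (.prod A B) → HasTy Γ (.fst t) A
  | snd {Γ t A B} : HasTy Γ t (.prod A B) → HasTy Γ (.snd t) B
  | lam {Γ t A B} : HasTy (A :: Γ) t B → HasTy Γ (.lam t) (.arr A B)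
  | app {Γ t u A B} : HasTy Γ t (.arr A B) → HasTy Γ u A → HasTy Γ (.app t u) B
  | lett {Γ t u A B} : HasTy Γ t (.dia A) → HasTy (A :: Γ) u B →
      HasTy Γ (.lett t u) (.dia B)

/-- The equational theory `Γ ⊢ t ≡ u : A` of SLC: the congruence generated by
⊤-η, ×-β, ×-η, →-β, →-η, ◇-η and ◇-β. -/
inductive EqTm : Ctx → Tm → Tm → Ty → Prop
  | refl {Γ t A} : HasTy Γ t A → EqTm Γ t t A
  | symm {Γ t u A} : EqTm Γ t u A → EqTm Γ u t A
  | trans {Γ t u v A} : EqTm Γ t u A → EqTm Γ u v A → EqTm Γ t v A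
  | pair_congr {Γ t t' u u' A B} : EqTm Γ t t' A → EqTm Γ u u' B →
      EqTm Γ (.pair t u) (.pair t' u') (.prod A B)
  | fst_congr {Γ t t' A B} : EqTm Γ t t' (.prod A B) → EqTm Γ (.fst t) (.fst t') A
  | snd_congr {Γ t t' A B} : EqTm Γ t t' (.prod A B) → EqTm Γ (.snd t) (.snd t') B
  | lam_congr {Γ t t' A B} : EqTm (A :: Γ) t t' B → EqTm Γ (.lam t) (.lam t') (.arr A B)
  | app_congr {Γ t t' u u' A B} : EqTm Γ t t' (.arr A B) → EqTm Γ u u' A →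
      EqTm Γ (.app t u) (.app t' u') B
  | lett_congr {Γ t t' u u' A B} : EqTm Γ t t' (.dia A) → EqTm (A :: Γ) u u' B →
      EqTm Γ (.lett t u) (.lett t' u') (.dia B)
  | unit_eta {Γ t} : HasTy Γ t .unit → EqTm Γ t .unit .unit
  | prod_beta1 {Γ t u A B} : HasTy Γ t A → HasTy Γ u B →
      EqTm Γ (.fst (.pair t u)) t A
  | prod_beta2 {Γ t u A B} : HasTy Γ t A → HasTy Γ u B →
      EqTm Γ (.snd (.pair t u)) u B
  | prod_eta {Γ t A B} : HasTy Γ t (.prod A B) →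
      EqTm Γ t (.pair (.fst t) (.snd t)) (.prod A B)
  | arr_beta {Γ t u A B} : HasTy (A :: Γ) t B → HasTy Γ u A →
      EqTm Γ (.app (.lam t) u) (subst 0 u t) B
  | arr_eta {Γ t A B} : HasTy Γ t (.arr A B) →
      EqTm Γ t (.lam (.app (rename Nat.succ t) (.var 0))) (.arr A B)
  | dia_eta {Γ t A} : HasTy Γ t (.dia A) →
      EqTm Γ t (.lett t (.var 0)) (.dia A)
  | dia_beta {Γ t u u' A B C} : HasTy Γ t (.dia A) → HasTy (A :: Γ) u B →
      HasTy (B :: Γ) u' C →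
      EqTm Γ (.lett (.lett t u) u')
        (.lett t (subst 0 u (rename (liftRen Nat.succ) u'))) (.dia C)

mutual
  /-- Neutral terms `Γ ⊢ne n : A` of SLC. -/
  inductive Neu : Ctx → Tm → Ty → Prop
    | var {Γ n A} : Γ[n]? = some A → Neu Γ (.var n) A
    | fst {Γ t A B} : Neu Γ t (.prod A B) → Neu Γ (.fst t) A
    | snd {Γ t A B} : Neu Γ t (.prod A B) → Neu Γ (.snd t) B
    | app {Γ t u A B} : Neu Γ t (.arr A B) → Nf Γ u A → Neu Γ (.app t u) B

  /-- Normal forms `Γ ⊢nf n : A` of SLC. -/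
  inductive Nf : Ctx → Tm → Ty → Prop
    | up {Γ t} : Neu Γ t .base → Nf Γ t .base
    | unit {Γ} : Nf Γ .unit .unit
    | pair {Γ t u A B} : Nf Γ t A → Nf Γ u B → Nf Γ (.pair t u) (.prod A B)
    | lam {Γ t A B} : Nf (A :: Γ) t B → Nf Γ (.lam t) (.arr A B)
    | lett {Γ t u A B} : Neu Γ t (.dia A) → Nf (A :: Γ) u B →
        Nf Γ (.lett t u) (.dia B)
end

/-!
Normalization by a Kripke logical relation `Red A Γ`: at the base type the reducible terms are
those equal to a normal form, and at function types the relation quantifies over all renamings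
into larger contexts. Reducibility is closed under `≡` and renaming; neutral terms are reducible
(reflection) and reducible terms are equal to normal forms (reification). By the fundamental
lemma, substituting reducible terms into a well-typed term gives a reducible term; the identity
substitution is reducible by reflection, so every well-typed term is reducible and hence
equal to a normal form.
-/

/-! ### Renaming and parallel substitution -/

theorem liftRen_id : liftRen id = id := by
  funext n; cases n <;> rfl

theorem liftRen_comp (ρ ρ' : ℕ → ℕ) : liftRen ρ' ∘ liftRen ρ = liftRen (ρ' ∘ ρ) := by
  funext n; cases n <;> rfl

theorem rename_id (t : Tm) : rename id t = t := by
  induction t <;> simp_all [rename, liftRen_id]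

theorem rename_rename (ρ ρ' : ℕ → ℕ) (t : Tm) :
    rename ρ' (rename ρ t) = rename (ρ' ∘ ρ) t := by
  induction t generalizing ρ ρ' <;> simp_all [rename, liftRen_comp]

def liftSub (σ : ℕ → Tm) : ℕ → Tm
  | 0 => .var 0
  | n + 1 => rename Nat.succ (σ n)

def psubst (σ : ℕ → Tm) : Tm → Tm
  | .var n => σ n
  | .unit => .unit
  | .pair t u => .pair (psubst σ t) (psubst σ u)
  | .fst t => .fst (psubst σ t)
  | .snd t => .snd (psubst σ t)
  | .lam t => .lam (psubst (liftSub σ) t)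
  | .app t u => .app (psubst σ t) (psubst σ u)
  | .lett t u => .lett (psubst σ t) (psubst (liftSub σ) u)

def scons (u : Tm) (σ : ℕ → Tm) : ℕ → Tm
  | 0 => u
  | n + 1 => σ n

theorem liftSub_var_comp (ρ : ℕ → ℕ) : liftSub (Tm.var ∘ ρ) = Tm.var ∘ liftRen ρ := by
  funext n; cases n <;> rfl

theorem psubst_var_comp (ρ : ℕ → ℕ) (t : Tm) : psubst (Tm.var ∘ ρ) t = rename ρ t := by
  induction t generalizing ρ <;> simp_all [psubst, rename, liftSub_var_comp]

theorem psubst_var (t : Tm) : psubst Tm.var t = t := by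
  simpa [rename_id] using psubst_var_comp id t

theorem liftSub_comp_liftRen (σ : ℕ → Tm) (ρ : ℕ → ℕ) :
    liftSub σ ∘ liftRen ρ = liftSub (σ ∘ ρ) := by
  funext n; cases n <;> rfl

theorem psubst_rename (σ : ℕ → Tm) (ρ : ℕ → ℕ) (t : Tm) :
    psubst σ (rename ρ t) = psubst (σ ∘ ρ) t := by
  induction t generalizing σ ρ <;> simp_all [psubst, rename, liftSub_comp_liftRen]

theorem rename_comp_liftSub (ρ : ℕ → ℕ) (σ : ℕ → Tm) :
    rename (liftRen ρ) ∘ liftSub σ = liftSub (rename ρ ∘ σ) := by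
  funext n; cases n
  · rfl
  · simp only [Function.comp_apply, liftSub, rename_rename]; rfl

theorem rename_psubst (ρ : ℕ → ℕ) (σ : ℕ → Tm) (t : Tm) :
    rename ρ (psubst σ t) = psubst (rename ρ ∘ σ) t := by
  induction t generalizing ρ σ <;> simp_all [psubst, rename, rename_comp_liftSub]

theorem psubst_comp_liftSub (σ τ : ℕ → Tm) :
    psubst (liftSub τ) ∘ liftSub σ = liftSub (psubst τ ∘ σ) := by
  funext n; cases n
  · rfl
  · simp only [Function.comp_apply, liftSub, psubst_rename, rename_psubst]; rfl

theorem psubst_psubst (σ τ : ℕ → Tm) (t : Tm) :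
    psubst τ (psubst σ t) = psubst (psubst τ ∘ σ) t := by
  induction t generalizing σ τ <;> simp_all [psubst, psubst_comp_liftSub]

def substSub (k : ℕ) (u : Tm) : ℕ → Tm := fun n => subst k u (.var n)

theorem liftSub_substSub (k : ℕ) (u : Tm) : liftSub (substSub k u) = substSub (k + 1) u := by
  funext n
  cases n with
  | zero => simp [liftSub, substSub, subst]
  | succ n =>
      simp only [liftSub, substSub, subst]
      split_ifs <;> simp only [rename, rename_rename, Tm.var.injEq] <;> first | omega | rfl

theorem subst_eq_psubst (k : ℕ) (u t : Tm) : subst k u t = psubst (substSub k u) t := by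
  induction t generalizing k with
  | var n => rfl
  | lam t ih => simp only [subst, psubst, ih, liftSub_substSub]
  | lett t t' ih ih' => simp only [subst, psubst, ih, ih', liftSub_substSub]
  | _ => simp_all [subst, psubst]

theorem subst_zero_eq_psubst (u t : Tm) : subst 0 u t = psubst (scons u Tm.var) t := by
  rw [subst_eq_psubst]
  congr 1
  funext n
  cases n
  · simp only [substSub, subst, scons, lt_self_iff_false, if_false, if_true]
    exact rename_id u
  · simp [substSub, subst, scons]

theorem rename_subst_zero (ρ : ℕ → ℕ) (u t : Tm) :
    rename ρ (subst 0 u t) = subst 0 (rename ρ u) (rename (liftRen ρ) t) := by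
  rw [subst_zero_eq_psubst, subst_zero_eq_psubst, rename_psubst, psubst_rename]
  congr 1
  funext n
  cases n <;> rfl

theorem rename_liftRen_weaken (ρ : ℕ → ℕ) (t : Tm) :
    rename (liftRen (liftRen ρ)) (rename (liftRen Nat.succ) t) =
      rename (liftRen Nat.succ) (rename (liftRen ρ) t) := by
  simp only [rename_rename, liftRen_comp]
  rfl

theorem subst_zero_rename_liftRen_psubst (ρ : ℕ → ℕ) (σ : ℕ → Tm) (u t : Tm) :
    subst 0 u (rename (liftRen ρ) (psubst (liftSub σ) t)) =
      psubst (scons u (rename ρ ∘ σ)) t := by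
  rw [subst_zero_eq_psubst, rename_psubst, psubst_psubst]
  congr 1
  funext n
  cases n
  · rfl
  · simp only [Function.comp_apply, liftSub, rename_rename, psubst_rename]
    exact psubst_var_comp ρ _

/-! ### Typing is stable under renaming and substitution -/

def IsRen (ρ : ℕ → ℕ) (Γ Δ : Ctx) : Prop :=
  ∀ n A, Γ[n]? = some A → Δ[ρ n]? = some A

theorem IsRen.lift {ρ : ℕ → ℕ} {Γ Δ : Ctx} (h : IsRen ρ Γ Δ) (A : Ty) :
    IsRen (liftRen ρ) (A :: Γ) (A :: Δ) := by
  rintro (_ | n) B hn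
  · simpa [liftRen] using hn
  · simpa [liftRen] using h n B (by simpa using hn)

theorem isRen_succ (Γ : Ctx) (A : Ty) : IsRen Nat.succ Γ (A :: Γ) := by
  intro n B hn; simpa using hn

theorem isRen_id (Γ : Ctx) : IsRen id Γ Γ := fun _ _ h => h

theorem IsRen.comp {ρ ρ' : ℕ → ℕ} {Γ Δ Θ : Ctx} (h : IsRen ρ Γ Δ) (h' : IsRen ρ' Δ Θ) :
    IsRen (ρ' ∘ ρ) Γ Θ := fun n A hn => h' _ A (h n A hn)

theorem HasTy.rename {Γ : Ctx} {t : Tm} {A : Ty} (ht : HasTy Γ t A) :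
    ∀ {Δ ρ}, IsRen ρ Γ Δ → HasTy Δ (rename ρ t) A := by
  induction ht with
  | var h => exact fun hρ => .var (hρ _ _ h)
  | unit => exact fun _ => .unit
  | pair _ _ ih ih' => exact fun hρ => .pair (ih hρ) (ih' hρ)
  | fst _ ih => exact fun hρ => .fst (ih hρ)
  | snd _ ih => exact fun hρ => .snd (ih hρ)
  | lam _ ih => exact fun hρ => .lam (ih (hρ.lift _))
  | app _ _ ih ih' => exact fun hρ => .app (ih hρ) (ih' hρ)
  | lett _ _ ih ih' => exact fun hρ => .lett (ih hρ) (ih' (hρ.lift _))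

def IsSub (σ : ℕ → Tm) (Γ Δ : Ctx) : Prop :=
  ∀ n A, Γ[n]? = some A → HasTy Δ (σ n) A

theorem IsSub.lift {σ : ℕ → Tm} {Γ Δ : Ctx} (h : IsSub σ Γ Δ) (A : Ty) :
    IsSub (liftSub σ) (A :: Γ) (A :: Δ) := by
  rintro (_ | n) B hn
  · exact .var (by simpa [liftSub] using hn)
  · exact (h n B (by simpa using hn)).rename (isRen_succ Δ A)

theorem IsSub.scons {σ : ℕ → Tm} {Γ Δ : Ctx} {u : Tm} {A : Ty} (hu : HasTy Δ u A)
    (hσ : IsSub σ Γ Δ) : IsSub (scons u σ) (A :: Γ) Δ := by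
  rintro (_ | n) B hn
  · obtain rfl : A = B := by simpa using hn
    exact hu
  · exact hσ n B (by simpa using hn)

theorem HasTy.psubst {Γ : Ctx} {t : Tm} {A : Ty} (ht : HasTy Γ t A) :
    ∀ {Δ σ}, IsSub σ Γ Δ → HasTy Δ (psubst σ t) A := by
  induction ht with
  | var h => exact fun hσ => hσ _ _ h
  | unit => exact fun _ => .unit
  | pair _ _ ih ih' => exact fun hσ => .pair (ih hσ) (ih' hσ)
  | fst _ ih => exact fun hσ => .fst (ih hσ)
  | snd _ ih => exact fun hσ => .snd (ih hσ)
  | lam _ ih => exact fun hσ => .lam (ih (hσ.lift _))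
  | app _ _ ih ih' => exact fun hσ => .app (ih hσ) (ih' hσ)
  | lett _ _ ih ih' => exact fun hσ => .lett (ih hσ) (ih' (hσ.lift _))

theorem HasTy.subst_zero {Γ : Ctx} {t u : Tm} {A B : Ty} (ht : HasTy (B :: Γ) t A)
    (hu : HasTy Γ u B) : HasTy Γ (subst 0 u t) A := by
  rw [subst_zero_eq_psubst]
  exact ht.psubst (IsSub.scons hu fun _ _ => .var)

theorem EqTm.hasTy {Γ : Ctx} {t u : Tm} {A : Ty} (h : EqTm Γ t u A) :
    HasTy Γ t A ∧ HasTy Γ u A := by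
  induction h with
  | refl h => exact ⟨h, h⟩
  | symm _ ih => exact ih.symm
  | trans _ _ ih ih' => exact ⟨ih.1, ih'.2⟩
  | pair_congr _ _ ih ih' => exact ⟨.pair ih.1 ih'.1, .pair ih.2 ih'.2⟩
  | fst_congr _ ih => exact ⟨.fst ih.1, .fst ih.2⟩
  | snd_congr _ ih => exact ⟨.snd ih.1, .snd ih.2⟩
  | lam_congr _ ih => exact ⟨.lam ih.1, .lam ih.2⟩
  | app_congr _ _ ih ih' => exact ⟨.app ih.1 ih'.1, .app ih.2 ih'.2⟩
  | lett_congr _ _ ih ih' => exact ⟨.lett ih.1 ih'.1, .lett ih.2 ih'.2⟩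
  | unit_eta h => exact ⟨h, .unit⟩
  | prod_beta1 h h' => exact ⟨.fst (.pair h h'), h⟩
  | prod_beta2 h h' => exact ⟨.snd (.pair h h'), h'⟩
  | prod_eta h => exact ⟨h, .pair (.fst h) (.snd h)⟩
  | arr_beta h h' => exact ⟨.app (.lam h) h', h.subst_zero h'⟩
  | arr_eta h => exact ⟨h, .lam (.app (h.rename (isRen_succ _ _)) (.var rfl))⟩
  | dia_eta h => exact ⟨h, .lett h (.var rfl)⟩
  | dia_beta h h' h'' =>
      exact ⟨.lett (.lett h h') h'',
        .lett h ((h''.rename ((isRen_succ _ _).lift _)).subst_zero h')⟩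

theorem EqTm.rename {Γ : Ctx} {t u : Tm} {A : Ty} (h : EqTm Γ t u A) :
    ∀ {Δ ρ}, IsRen ρ Γ Δ → EqTm Δ (_root_.rename ρ t) (_root_.rename ρ u) A := by
  induction h with
  | refl h => exact fun hρ => .refl (h.rename hρ)
  | symm _ ih => exact fun hρ => .symm (ih hρ)
  | trans _ _ ih ih' => exact fun hρ => .trans (ih hρ) (ih' hρ)
  | pair_congr _ _ ih ih' => exact fun hρ => .pair_congr (ih hρ) (ih' hρ)
  | fst_congr _ ih => exact fun hρ => .fst_congr (ih hρ)
  | snd_congr _ ih => exact fun hρ => .snd_congr (ih hρ)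
  | lam_congr _ ih => exact fun hρ => .lam_congr (ih (hρ.lift _))
  | app_congr _ _ ih ih' => exact fun hρ => .app_congr (ih hρ) (ih' hρ)
  | lett_congr _ _ ih ih' => exact fun hρ => .lett_congr (ih hρ) (ih' (hρ.lift _))
  | unit_eta h => exact fun hρ => .unit_eta (h.rename hρ)
  | prod_beta1 h h' => exact fun hρ => .prod_beta1 (h.rename hρ) (h'.rename hρ)
  | prod_beta2 h h' => exact fun hρ => .prod_beta2 (h.rename hρ) (h'.rename hρ)
  | prod_eta h => exact fun hρ => .prod_eta (h.rename hρ)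
  | arr_beta h h' =>
      intro Δ ρ hρ
      rw [rename_subst_zero]
      exact .arr_beta (h.rename (hρ.lift _)) (h'.rename hρ)
  | @arr_eta _ t _ _ h =>
      intro Δ ρ hρ
      have hw : _root_.rename (liftRen ρ) (_root_.rename Nat.succ t) =
          _root_.rename Nat.succ (_root_.rename ρ t) := by
        simp only [rename_rename]; rfl
      simpa only [_root_.rename, hw, liftRen] using EqTm.arr_eta (h.rename hρ)
  | dia_eta h => exact fun hρ => .dia_eta (h.rename hρ)
  | dia_beta h h' h'' =>
      intro Δ ρ hρ
      rw [_root_.rename, _root_.rename, _root_.rename, rename_subst_zero,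
        rename_liftRen_weaken]
      exact .dia_beta (h.rename hρ) (h'.rename (hρ.lift _)) (h''.rename (hρ.lift _))

mutual

theorem Neu.rename {Γ Δ : Ctx} {t : Tm} {A : Ty} {ρ : ℕ → ℕ} (hρ : IsRen ρ Γ Δ) :
    Neu Γ t A → Neu Δ (rename ρ t) A
  | .var h => .var (hρ _ _ h)
  | .fst h => .fst (Neu.rename hρ h)
  | .snd h => .snd (Neu.rename hρ h)
  | .app h h' => .app (Neu.rename hρ h) (Nf.rename hρ h')

theorem Nf.rename {Γ Δ : Ctx} {t : Tm} {A : Ty} {ρ : ℕ → ℕ} (hρ : IsRen ρ Γ Δ) :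
    Nf Γ t A → Nf Δ (rename ρ t) A
  | .up h => .up (Neu.rename hρ h)
  | .unit => .unit
  | .pair h h' => .pair (Nf.rename hρ h) (Nf.rename hρ h')
  | .lam h => .lam (Nf.rename (hρ.lift _) h)
  | .lett h h' => .lett (Neu.rename hρ h) (Nf.rename (hρ.lift _) h')

end

mutual

theorem Neu.hasTy {Γ : Ctx} {t : Tm} {A : Ty} : Neu Γ t A → HasTy Γ t A
  | .var h => .var h
  | .fst h => .fst h.hasTy
  | .snd h => .snd h.hasTy
  | .app h h' => .app h.hasTy h'.hasTy

theorem Nf.hasTy {Γ : Ctx} {t : Tm} {A : Ty} : Nf Γ t A → HasTy Γ t A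
  | .up h => h.hasTy
  | .unit => .unit
  | .pair h h' => .pair h.hasTy h'.hasTy
  | .lam h => .lam h.hasTy
  | .lett h h' => .lett h.hasTy h'.hasTy

end

/-! ### The logical relation -/

/-- The clause for `◇A` asks for a single `let` on a neutral term only: nested lets are
flattened by ◇-β. -/
def Red : Ty → Ctx → Tm → Prop
  | .base, Γ, t => ∃ n, Nf Γ n .base ∧ EqTm Γ t n .base
  | .unit, Γ, t => HasTy Γ t .unit
  | .prod A B, Γ, t => HasTy Γ t (.prod A B) ∧ Red A Γ (.fst t) ∧ Red B Γ (.snd t)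
  | .arr A B, Γ, t => HasTy Γ t (.arr A B) ∧
      ∀ Δ ρ, IsRen ρ Γ Δ → ∀ u, Red A Δ u → Red B Δ (.app (rename ρ t) u)
  | .dia A, Γ, t => HasTy Γ t (.dia A) ∧
      ∃ A' n u, Neu Γ n (.dia A') ∧ Red A (A' :: Γ) u ∧ EqTm Γ t (.lett n u) (.dia A)

theorem Red.hasTy {A : Ty} {Γ : Ctx} {t : Tm} (h : Red A Γ t) : HasTy Γ t A := by
  cases A with
  | base => exact h.choose_spec.2.hasTy.1
  | unit => exact h
  | prod | arr | dia => exact h.1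

theorem Red.of_eqTm {A : Ty} {Γ : Ctx} {t t' : Tm} (e : EqTm Γ t t' A) (h : Red A Γ t) :
    Red A Γ t' := by
  induction A generalizing Γ t t' with
  | base =>
      obtain ⟨n, hn, hn'⟩ := h
      exact ⟨n, hn, e.symm.trans hn'⟩
  | unit => exact e.hasTy.2
  | prod A B ihA ihB => exact ⟨e.hasTy.2, ihA e.fst_congr h.2.1, ihB e.snd_congr h.2.2⟩
  | arr _ _ _ ihB =>
      refine ⟨e.hasTy.2, fun Δ ρ hρ u hu => ihB ?_ (h.2 Δ ρ hρ u hu)⟩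
      exact .app_congr (e.rename hρ) (.refl hu.hasTy)
  | dia =>
      obtain ⟨-, A', n, u, hn, hu, hn'⟩ := h
      exact ⟨e.hasTy.2, A', n, u, hn, hu, e.symm.trans hn'⟩

theorem Red.rename {A : Ty} {Γ Δ : Ctx} {t : Tm} {ρ : ℕ → ℕ} (hρ : IsRen ρ Γ Δ)
    (h : Red A Γ t) : Red A Δ (rename ρ t) := by
  induction A generalizing Γ Δ t ρ with
  | base =>
      obtain ⟨n, hn, hn'⟩ := h
      exact ⟨_, hn.rename hρ, hn'.rename hρ⟩
  | unit => exact HasTy.rename h hρ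
  | prod A B ihA ihB => exact ⟨h.1.rename hρ, ihA hρ h.2.1, ihB hρ h.2.2⟩
  | arr =>
      refine ⟨h.1.rename hρ, fun Θ ρ' hρ' u hu => ?_⟩
      simpa only [rename_rename] using h.2 Θ (ρ' ∘ ρ) (hρ.comp hρ') u hu
  | dia _ ihA =>
      obtain ⟨ht, A', n, u, hn, hu, hn'⟩ := h
      exact ⟨ht.rename hρ, A', _, _, hn.rename hρ, ihA (hρ.lift A') hu, hn'.rename hρ⟩

mutual

theorem Red.of_neu : ∀ {A : Ty} {Γ : Ctx} {t : Tm}, Neu Γ t A → Red A Γ t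
  | .base, _, _, h => ⟨_, .up h, .refl h.hasTy⟩
  | .unit, _, _, h => h.hasTy
  | .prod _ _, _, _, h => ⟨h.hasTy, Red.of_neu h.fst, Red.of_neu h.snd⟩
  | .arr _ _, _, _, h => by
      refine ⟨h.hasTy, fun Δ ρ hρ u hu => ?_⟩
      obtain ⟨m, hm, hum⟩ := Red.exists_nf hu
      exact Red.of_eqTm (.app_congr (.refl (h.hasTy.rename hρ)) hum.symm)
        (Red.of_neu (.app (h.rename hρ) hm))
  | .dia A, _, _, h =>
      ⟨h.hasTy, A, _, .var 0, h, Red.of_neu (.var rfl), .dia_eta h.hasTy⟩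

theorem Red.exists_nf : ∀ {A : Ty} {Γ : Ctx} {t : Tm}, Red A Γ t → ∃ n, Nf Γ n A ∧ EqTm Γ t n A
  | .base, _, _, h => h
  | .unit, _, _, h => ⟨.unit, .unit, .unit_eta h⟩
  | .prod _ _, _, _, ⟨ht, h, h'⟩ => by
      obtain ⟨n, hn, e⟩ := Red.exists_nf h
      obtain ⟨n', hn', e'⟩ := Red.exists_nf h'
      exact ⟨.pair n n', .pair hn hn', .trans (.prod_eta ht) (.pair_congr e e')⟩
  | .arr A _, Γ, _, ⟨ht, h⟩ => by
      obtain ⟨n, hn, e⟩ :=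
        Red.exists_nf (h (A :: Γ) Nat.succ (isRen_succ Γ A) (.var 0) (Red.of_neu (.var rfl)))
      exact ⟨.lam n, .lam hn, .trans (.arr_eta ht) (.lam_congr e)⟩
  | .dia _, _, _, ⟨_, _, m, _, hm, h, e⟩ => by
      obtain ⟨n, hn, e'⟩ := Red.exists_nf h
      exact ⟨.lett m n, .lett hm hn, e.trans (.lett_congr (.refl hm.hasTy) e')⟩

end

/-! ### The fundamental lemma -/

def RedSub (σ : ℕ → Tm) (Γ Δ : Ctx) : Prop :=
  ∀ n A, Γ[n]? = some A → Red A Δ (σ n)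

theorem RedSub.isSub {σ : ℕ → Tm} {Γ Δ : Ctx} (h : RedSub σ Γ Δ) : IsSub σ Γ Δ :=
  fun n A hn => (h n A hn).hasTy

theorem RedSub.scons {σ : ℕ → Tm} {Γ Δ : Ctx} {u : Tm} {A : Ty} (hu : Red A Δ u)
    (hσ : RedSub σ Γ Δ) : RedSub (scons u σ) (A :: Γ) Δ := by
  rintro (_ | n) B hn
  · obtain rfl : A = B := by simpa using hn
    exact hu
  · exact hσ n B (by simpa using hn)

theorem RedSub.rename {σ : ℕ → Tm} {Γ Δ Θ : Ctx} {ρ : ℕ → ℕ} (hρ : IsRen ρ Δ Θ)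
    (hσ : RedSub σ Γ Δ) : RedSub (rename ρ ∘ σ) Γ Θ :=
  fun n A hn => (hσ n A hn).rename hρ

theorem redSub_var (Γ : Ctx) : RedSub Tm.var Γ Γ := fun _ _ h => .of_neu (.var h)

theorem red_psubst_of_hasTy {Γ Δ : Ctx} {t : Tm} {A : Ty} {σ : ℕ → Tm} (ht : HasTy Γ t A)
    (hσ : RedSub σ Γ Δ) : Red A Δ (psubst σ t) := by
  induction ht generalizing Δ σ with
  | var h => exact hσ _ _ h
  | unit => exact .unit
  | pair _ _ ih ih' =>
      have h := ih hσ
      have h' := ih' hσ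
      exact ⟨.pair h.hasTy h'.hasTy, h.of_eqTm (.symm (.prod_beta1 h.hasTy h'.hasTy)),
        h'.of_eqTm (.symm (.prod_beta2 h.hasTy h'.hasTy))⟩
  | fst _ ih => exact (ih hσ).2.1
  | snd _ ih => exact (ih hσ).2.2
  | @lam Γ t A B ht ih =>
      have hbody : HasTy (A :: Δ) (psubst (liftSub σ) t) B := ht.psubst (hσ.isSub.lift A)
      refine ⟨.lam hbody, fun Θ ρ hρ u hu => ?_⟩
      have hβ := EqTm.arr_beta (hbody.rename (hρ.lift A)) hu.hasTy
      rw [subst_zero_rename_liftRen_psubst] at hβ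
      exact (ih (RedSub.scons hu (hσ.rename hρ))).of_eqTm hβ.symm
  | app _ _ ih ih' =>
      simpa only [psubst, rename_id] using (ih hσ).2 Δ id (isRen_id Δ) _ (ih' hσ)
  | @lett Γ t u A B _ hu ih ih' =>
      obtain ⟨ht, A', n, w, hn, hw, e⟩ := ih hσ
      have hbody : HasTy (A :: Δ) (psubst (liftSub σ) u) B := hu.psubst (hσ.isSub.lift A)
      refine ⟨.lett ht hbody, A', n, _, hn, ih' (RedSub.scons hw (hσ.rename (isRen_succ Δ A'))), ?_⟩
      have hβ := EqTm.dia_beta hn.hasTy hw.hasTy hbody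
      rw [subst_zero_rename_liftRen_psubst] at hβ
      exact (EqTm.lett_congr e (.refl hbody)).trans hβ

/-- correctness of normalization for SLC: every well-typed term
`Γ ⊢ t : A` has a normal form `Γ ⊢nf n : A` with `Γ ⊢ t ≡ n : A`. -/
theorem normalization_correct_SLC {Γ : Ctx} {t : Tm} {A : Ty}
    (ht : HasTy Γ t A) : ∃ n : Tm, Nf Γ n A ∧ EqTm Γ t n A := by
  simpa only [psubst_var] using (red_psubst_of_hasTy ht (redSub_var Γ)).exists_nf
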